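/- Let q be a real number with q > 0 and q ≠ 1, let N ≥ 1, and set λ = [N/2] = (q^{N/2} − q^{−N/2})/(q − q^{−1}). For 0 ≤ i ≤ N let b_i > 0 be the positive square root of binom_q(N, i) · {N/2 − i} / {N/2} (this quantity is positive). Let A be a real symmetric (N+1)×(N+1) matrix, indexed by 0,…,N, with A_{ij} = 0 whenever |i−j| ≠ 1, and suppose A·b = λ·b where b = (b_0, …, b_N). Then for every 0 ≤ i ≤ N−1: A_{i,i+1}² = [i+1]·[N−i] / ({N/2 − i}·{N/2 − i − 1}). (Second part of the Technical Lemma in Section 4.5.) -/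

import Mathlib

noncomputable section

/-- The quantum number `[x] = (q^x − q^{−x})/(q − q⁻¹)` for real `x` (real powers). -/
def qnum (q : ℝ) (x : ℝ) : ℝ := (q ^ x - q ^ (-x)) / (q - q⁻¹)

/-- `{x} = q^x + q^{−x}` (real powers). -/
def brace (q : ℝ) (x : ℝ) : ℝ := q ^ x + q ^ (-x)

/-- The quantum factorial `[n]! = ∏_{i=1}^n [i]`. -/
def qfact (q : ℝ) (n : ℕ) : ℝ := ∏ i ∈ Finset.range n, qnum q ((i : ℝ) + 1)

/-- The quantum binomial coefficient `binom_q(n,m)` for `0 ≤ m ≤ n`. -/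
def qbinom (q : ℝ) (n m : ℕ) : ℝ :=
  if m ≤ n then qfact q n / (qfact q m * qfact q (n - m)) else 0

/-! Write `c i = A_{i,i+1} b_i b_{i+1}`. Row `k` of `A b = λ b`, multiplied by `b_k`, reads
`c (k-1) + c k = λ b_k²`, so the `c i` are determined recursively by the `b_k²`. For the given
`b_k²` the solution is `c i = binom_q(N,i) [N-i] / {N/2}`, thanks to `[N/2] {N/2 - k} = [N-k] + [k]`
and `binom_q(N,i+1) [i+1] = binom_q(N,i) [N-i]`. Dividing `c i²` by `b_i² b_{i+1}²` gives the
formula. -/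

section Tridiagonal

open Matrix

variable {R : Type*} [CommRing R] {n : ℕ} {A : Matrix (Fin (n + 1)) (Fin (n + 1)) R}
  {b : Fin (n + 1) → R}

lemma Matrix.mulVec_apply_eq_sum_of_eq_zero {m : Type*} [Fintype m] {M : Matrix m m R}
    {k : m} (s : Finset m) (hM : ∀ j ∉ s, M k j = 0) (v : m → R) :
    (M *ᵥ v) k = ∑ j ∈ s, M k j * v j :=
  (Finset.sum_subset (Finset.subset_univ s) fun j _ hj => by simp [hM j hj]).symm

variable (htri : ∀ i j : Fin (n + 1), |(i : ℤ) - (j : ℤ)| ≠ 1 → A i j = 0)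
include htri

lemma mulVec_apply_zero_of_tridiagonal (hn : 0 < n) :
    (A *ᵥ b) 0 = A 0 ⟨1, by omega⟩ * b ⟨1, by omega⟩ := by
  rw [Matrix.mulVec_apply_eq_sum_of_eq_zero {⟨1, by omega⟩}, Finset.sum_singleton]
  intro j hj
  refine htri _ _ fun h => hj (Finset.mem_singleton.mpr (Fin.ext ?_))
  rw [abs_eq zero_le_one] at h
  simp only [Fin.val_zero] at h ⊢
  omega

lemma mulVec_apply_succ_of_tridiagonal {i : ℕ} (hi : i + 1 < n) :
    (A *ᵥ b) ⟨i + 1, by omega⟩ = A ⟨i + 1, by omega⟩ ⟨i, by omega⟩ * b ⟨i, by omega⟩ +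
      A ⟨i + 1, by omega⟩ ⟨i + 2, by omega⟩ * b ⟨i + 2, by omega⟩ := by
  rw [Matrix.mulVec_apply_eq_sum_of_eq_zero {⟨i, by omega⟩, ⟨i + 2, by omega⟩},
    Finset.sum_pair (by simp)]
  intro j hj
  simp only [Finset.mem_insert, Finset.mem_singleton, Fin.ext_iff] at hj
  refine htri _ _ fun h => ?_
  rw [abs_eq zero_le_one] at h
  push_cast at h
  omega

lemma superdiag_mul_eq_of_mulVec_eq_smul (hsymm : A.IsSymm) {μ : R} (heig : A *ᵥ b = μ • b)
    {c : ℕ → R} (hc0 : μ * b 0 ^ 2 = c 0)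
    (hc : ∀ i (hi : i + 1 < n), μ * b ⟨i + 1, by omega⟩ ^ 2 = c i + c (i + 1)) :
    ∀ i (hi : i < n),
      A ⟨i, hi.trans n.lt_succ_self⟩ ⟨i + 1, Nat.succ_lt_succ hi⟩ *
        (b ⟨i, hi.trans n.lt_succ_self⟩ * b ⟨i + 1, Nat.succ_lt_succ hi⟩) = c i := by
  have hrow (k : Fin (n + 1)) : (A *ᵥ b) k = μ * b k := by simp [heig]
  intro i
  induction i with
  | zero =>
    intro hn
    have h0 := hrow 0
    rw [mulVec_apply_zero_of_tridiagonal htri hn] at h0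
    show A 0 ⟨1, _⟩ * (b 0 * b ⟨1, _⟩) = c 0
    linear_combination b 0 * h0 + hc0
  | succ i ih =>
    intro hi
    have hrow_succ := hrow ⟨i + 1, by omega⟩
    rw [mulVec_apply_succ_of_tridiagonal htri hi, hsymm.apply] at hrow_succ
    linear_combination b ⟨i + 1, by omega⟩ * hrow_succ + hc i hi - ih (by omega)

end Tridiagonal

section Quantum

lemma qfact_zero (q : ℝ) : qfact q 0 = 1 := Finset.prod_range_zero _

lemma qfact_succ (q : ℝ) (n : ℕ) : qfact q (n + 1) = qfact q n * qnum q ((n + 1 : ℕ) : ℝ) := by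
  rw [qfact, Finset.prod_range_succ, Nat.cast_succ]
  rfl

lemma qnum_zero (q : ℝ) : qnum q 0 = 0 := by simp [qnum]

variable {q : ℝ}

lemma brace_pos (hq0 : 0 < q) (x : ℝ) : 0 < brace q x := by
  unfold brace
  positivity

lemma qnum_mul_brace (hq0 : 0 < q) (a c : ℝ) :
    qnum q a * brace q c = qnum q (a + c) + qnum q (a - c) := by
  unfold qnum brace
  rw [div_mul_eq_mul_div, ← add_div, sub_eq_add_neg a c, neg_add, neg_add, neg_neg,
    Real.rpow_add hq0, Real.rpow_add hq0, Real.rpow_add hq0, Real.rpow_add hq0]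
  ring

lemma qnum_half_mul_brace (hq0 : 0 < q) (x k : ℝ) :
    qnum q (x / 2) * brace q (x / 2 - k) = qnum q (x - k) + qnum q k := by
  rw [qnum_mul_brace hq0]
  ring_nf

variable (hq0 : 0 < q) (hq1 : q ≠ 1)
include hq0 hq1

lemma qnum_pos {x : ℝ} (hx : 0 < x) : 0 < qnum q x := by
  unfold qnum
  rcases hq1.lt_or_gt with hq | hq
  · apply div_pos_of_neg_of_neg
    · have h1 : q ^ x < 1 := Real.rpow_lt_one hq0.le hq hx
      have h2 : 1 < q ^ (-x) := Real.one_lt_rpow_of_pos_of_lt_one_of_neg hq0 hq (by linarith)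
      linarith
    · linarith [(one_lt_inv₀ hq0).mpr hq]
  · apply div_pos
    · have h1 : 1 < q ^ x := Real.one_lt_rpow hq hx
      have h2 : q ^ (-x) < 1 := Real.rpow_lt_one_of_one_lt_of_neg hq (by linarith)
      linarith
    · linarith [(inv_lt_one₀ hq0).mpr hq]

lemma qfact_pos (n : ℕ) : 0 < qfact q n :=
  Finset.prod_pos fun _ _ => qnum_pos hq0 hq1 (by positivity)

lemma qbinom_pos {n m : ℕ} (h : m ≤ n) : 0 < qbinom q n m := by
  rw [qbinom, if_pos h]
  exact div_pos (qfact_pos hq0 hq1 n) (mul_pos (qfact_pos hq0 hq1 m) (qfact_pos hq0 hq1 _))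

lemma qbinom_zero_right (n : ℕ) : qbinom q n 0 = 1 := by
  rw [qbinom, if_pos n.zero_le, qfact_zero, one_mul, Nat.sub_zero,
    div_self (qfact_pos hq0 hq1 n).ne']

lemma qbinom_succ_mul_qnum {n i : ℕ} (h : i < n) :
    qbinom q n (i + 1) * qnum q ((i + 1 : ℕ) : ℝ) = qbinom q n i * qnum q ((n : ℝ) - i) := by
  have hfact : qfact q (n - i) = qfact q (n - (i + 1)) * qnum q ((n : ℝ) - i) := by
    rw [show n - i = n - (i + 1) + 1 by omega, qfact_succ]
    push_cast [Nat.cast_sub h]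
    ring_nf
  rw [qbinom, qbinom, if_pos (Nat.succ_le_of_lt h), if_pos h.le, qfact_succ, hfact]
  have hi : qnum q ((i : ℝ) + 1) ≠ 0 := (qnum_pos hq0 hq1 (by positivity)).ne'
  have hni : qnum q ((n : ℝ) - i) ≠ 0 := (qnum_pos hq0 hq1 (sub_pos.mpr (Nat.cast_lt.mpr h))).ne'
  push_cast
  field_simp

lemma qnum_half_mul_qbinom_brace_zero (N : ℕ) :
    qnum q ((N : ℝ) / 2) * (qbinom q N 0 * brace q ((N : ℝ) / 2 - (0 : ℕ)) / brace q ((N : ℝ) / 2)) =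
      qbinom q N 0 * qnum q ((N : ℝ) - (0 : ℕ)) / brace q ((N : ℝ) / 2) := by
  rw [qbinom_zero_right hq0 hq1, ← mul_div_assoc, mul_left_comm, qnum_half_mul_brace hq0,
    Nat.cast_zero, qnum_zero, add_zero]

lemma qnum_half_mul_qbinom_brace_succ {N i : ℕ} (hi : i < N) :
    qnum q ((N : ℝ) / 2) *
        (qbinom q N (i + 1) * brace q ((N : ℝ) / 2 - (i + 1 : ℕ)) / brace q ((N : ℝ) / 2)) =
      qbinom q N i * qnum q ((N : ℝ) - i) / brace q ((N : ℝ) / 2) +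
        qbinom q N (i + 1) * qnum q ((N : ℝ) - (i + 1 : ℕ)) / brace q ((N : ℝ) / 2) := by
  rw [← mul_div_assoc, ← add_div, mul_left_comm, qnum_half_mul_brace hq0, mul_add,
    qbinom_succ_mul_qnum hq0 hq1 hi, add_comm]

lemma qbinom_mul_qnum_sq_div {N i : ℕ} (hi : i < N) :
    (qbinom q N i * qnum q ((N : ℝ) - i) / brace q ((N : ℝ) / 2)) ^ 2 /
        (qbinom q N i * brace q ((N : ℝ) / 2 - i) / brace q ((N : ℝ) / 2) *
          (qbinom q N (i + 1) * brace q ((N : ℝ) / 2 - (i + 1 : ℕ)) / brace q ((N : ℝ) / 2))) =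
      qnum q ((i : ℝ) + 1) * qnum q ((N : ℝ) - i) /
        (brace q ((N : ℝ) / 2 - i) * brace q ((N : ℝ) / 2 - i - 1)) := by
  have hrec := qbinom_succ_mul_qnum hq0 hq1 hi
  have hC := (qbinom_pos hq0 hq1 (show i + 1 ≤ N by omega)).ne'
  have hB := (brace_pos hq0 ((N : ℝ) / 2)).ne'
  have hR := (brace_pos hq0 ((N : ℝ) / 2 - i)).ne'
  have hS := (brace_pos hq0 ((N : ℝ) / 2 - i - 1)).ne'
  push_cast at hrec ⊢
  rw [← sub_sub]
  generalize brace q ((N : ℝ) / 2) = B at *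
  generalize brace q ((N : ℝ) / 2 - i) = R at *
  generalize brace q ((N : ℝ) / 2 - i - 1) = S at *
  field_simp
  linear_combination -qnum q ((N : ℝ) - i) * hrec

end Quantum

/-- Second part of the Technical Lemma in Section 4.5: if the symmetric tridiagonal
matrix `A` has eigenvalue `[N/2]` with eigenvector `b`, `b_i² = binom_q(N,i)·{N/2−i}/{N/2}`,
`b_i > 0`, then `A_{i,i+1}² = [i+1]·[N−i]/({N/2−i}·{N/2−i−1})`. -/
theorem tridiagonal_entries_squared (q : ℝ) (hq0 : 0 < q) (hq1 : q ≠ 1)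
    (N : ℕ)
    (b : Fin (N + 1) → ℝ)
    (hb : ∀ i : Fin (N + 1), 0 < b i ∧
      (b i) ^ 2 = qbinom q N (i : ℕ) * brace q ((N : ℝ) / 2 - (i : ℕ)) /
        brace q ((N : ℝ) / 2))
    (A : Matrix (Fin (N + 1)) (Fin (N + 1)) ℝ) (hsymm : A.IsSymm)
    (htri : ∀ i j : Fin (N + 1), |(i : ℤ) - (j : ℤ)| ≠ 1 → A i j = 0)
    (heig : A.mulVec b = qnum q ((N : ℝ) / 2) • b) :
    ∀ i : ℕ, (hi : i < N) →
      (A ⟨i, by omega⟩ ⟨i + 1, by omega⟩) ^ 2 =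
        qnum q ((i : ℝ) + 1) * qnum q ((N : ℝ) - i) /
          (brace q ((N : ℝ) / 2 - i) * brace q ((N : ℝ) / 2 - i - 1)) := by
  intro i hi
  have hc := superdiag_mul_eq_of_mulVec_eq_smul htri hsymm heig
    (c := fun k => qbinom q N k * qnum q ((N : ℝ) - k) / brace q ((N : ℝ) / 2))
    (by rw [(hb 0).2]; exact qnum_half_mul_qbinom_brace_zero hq0 hq1 N)
    (fun k hk => by rw [(hb _).2]; exact qnum_half_mul_qbinom_brace_succ hq0 hq1 (by omega)) i hi
  rw [eq_div_of_mul_eq (mul_pos (hb _).1 (hb _).1).ne' hc, div_pow, mul_pow, (hb _).2, (hb _).2]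
  exact qbinom_mul_qnum_sq_div hq0 hq1 hi
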